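/- arXiv:2302.05156 — 3 statements merged into one kernel-verified Lean document; each statement's English description precedes it below -/
import Mathlib

section
/- Let ℓ, n ∈ ℕ with ℓ ≥ n ≥ 1. The set S = {(E,Q) ∈ ℝ^{ℓ×n} × ℝ^{ℓ×n} : EᵀQ = QᵀE and EᵀQ is positive definite} is relative generic in V = {(E,Q) ∈ ℝ^{ℓ×n} × ℝ^{ℓ×n} : EᵀQ = QᵀE and EᵀQ is positive semidefinite}. -/
open Matrix

/-- An algebraic set in `ℝ^ι`: the common zero locus of finitely many real
polynomials in the variables indexed by `ι`. -/
def IsAlgebraicSet {ι : Type} [Fintype ι] (W : Set (ι → ℝ)) : Prop :=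
  ∃ (k : ℕ) (p : Fin k → MvPolynomial ι ℝ),
    W = {x | ∀ i, MvPolynomial.eval x (p i) = 0}

/-- `S` is relative generic in `V`. -/
def RelGeneric {ι : Type} [Fintype ι] (S V : Set (ι → ℝ)) : Prop :=
  ∃ W : Set (ι → ℝ), IsAlgebraicSet W ∧ Sᶜ ∩ V ⊆ W ∩ V ∧ V ⊆ closure (Wᶜ ∩ V)

/-- Coordinates of the product `ℝ^{ℓ×n} × ℝ^{ℓ×n}` of two matrix spaces. -/
abbrev PairIdx (ℓ n : ℕ) := (Fin ℓ × Fin n) ⊕ (Fin ℓ × Fin n)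

/-- First matrix `E` of a pair `(E, Q)`. -/
def pE {ℓ n : ℕ} (x : PairIdx ℓ n → ℝ) : Matrix (Fin ℓ) (Fin n) ℝ :=
  Matrix.of fun i j => x (Sum.inl (i, j))

/-- Second matrix `Q` of a pair `(E, Q)`. -/
def pQ {ℓ n : ℕ} (x : PairIdx ℓ n → ℝ) : Matrix (Fin ℓ) (Fin n) ℝ :=
  Matrix.of fun i j => x (Sum.inr (i, j))

/-!
Take `W = {det (EᵀQ) = 0}`: a positive semidefinite `EᵀQ` with nonzero determinant is positive
definite. For density, given `(E, Q)` with `EᵀQ` positive semidefinite, choose an injective `Z`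
with `ZᵀQ = QᵀQ` by adding to `Q` an injection of `ker Q` into `(range Q)ᗮ`, which exists because
`dim ker Q = n - rank Q ≤ ℓ - rank Q`. Then
`(E + tZ)ᵀ (Q + t (E + tZ)) = EᵀQ + t (QᵀQ + (E + tZ)ᵀ (E + tZ))`
is positive definite whenever `t > 0` and `E + tZ` is injective. The latter fails only for
finitely many `t`: if `(E + tZ) v = 0` with `v ≠ 0`, then `-t` is an eigenvalue of `LE` for a
left inverse `L` of `Z`.
-/

open Module Filter Topology

section InnerProductSpace

variable {𝕜 E F : Type*} [RCLike 𝕜] [NormedAddCommGroup E] [InnerProductSpace 𝕜 E]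
  [FiniteDimensional 𝕜 E] [NormedAddCommGroup F] [InnerProductSpace 𝕜 F] [FiniteDimensional 𝕜 F]

theorem LinearMap.exists_injective_adjoint_comp_eq (f : E →ₗ[𝕜] F)
    (h : finrank 𝕜 E ≤ finrank 𝕜 F) :
    ∃ g : E →ₗ[𝕜] F, Function.Injective g ∧ g.adjoint ∘ₗ f = f.adjoint ∘ₗ f := by
  have hdim : finrank 𝕜 (ker f) ≤ finrank 𝕜 (range f)ᗮ := by
    have := f.finrank_range_add_finrank_ker
    have := (range f).finrank_add_finrank_orthogonal
    omega
  set K := ker f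
  set C := range f
  obtain ⟨j, hj⟩ := finrank_le_iff_exists_linearMap.mp hdim
  let w : E →ₗ[𝕜] F := Cᗮ.subtype ∘ₗ j ∘ₗ K.orthogonalProjectionOnto.toLinearMap
  have hw : ∀ u, w u ∈ Cᗮ := fun u => (j _).2
  refine ⟨f + w, injective_iff_map_eq_zero _ |>.mpr fun v hv => ?_, ?_⟩
  · have hfv : f v = 0 := Submodule.disjoint_def.mp C.orthogonal_disjoint _ (mem_range_self f v)
      (eq_neg_of_add_eq_zero_left hv ▸ Cᗮ.neg_mem (hw v))
    have hwv : w v = 0 := by simpa [hfv] using hv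
    have hvK : v ∈ K := hfv
    have hpv : K.orthogonalProjectionOnto v = 0 :=
      hj (Subtype.ext (by simpa [w] using hwv) |>.trans (map_zero j).symm)
    rw [Submodule.orthogonalProjectionOnto_eq_zero_iff] at hpv
    exact Submodule.disjoint_def.mp K.orthogonal_disjoint v hvK hpv
  · refine LinearMap.ext fun v => ext_inner_left 𝕜 fun u => ?_
    simp only [comp_apply, adjoint_inner_right, add_apply, inner_add_left,
      (Submodule.mem_orthogonal' C (w u)).mp (hw u) (f v) (mem_range_self f v), add_zero]

end InnerProductSpace

theorem LinearMap.finite_setOf_not_injective_add_smul {K V W : Type*} [Field K]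
    [AddCommGroup V] [Module K V] [FiniteDimensional K V] [AddCommGroup W] [Module K W]
    (f g : V →ₗ[K] W) (hg : Function.Injective g) :
    {t : K | ¬ Function.Injective (f + t • g)}.Finite := by
  obtain ⟨h, hhg⟩ := g.exists_leftInverse_of_injective (ker_eq_bot.mpr hg)
  refine ((Module.End.finite_hasEigenvalue (h ∘ₗ f)).image Neg.neg).subset fun t ht => ?_
  obtain ⟨v, hv, hv0⟩ : ∃ v, (f + t • g) v = 0 ∧ v ≠ 0 := by
    simpa [injective_iff_map_eq_zero] using ht
  refine ⟨-t, Module.End.hasEigenvalue_of_hasEigenvector ⟨?_, hv0⟩, neg_neg t⟩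
  rw [Module.End.mem_eigenspace_iff, comp_apply, eq_neg_of_add_eq_zero_left hv]
  simpa using congr($hhg (-t • v))

namespace Matrix

theorem exists_mulVec_injective_conjTranspose_mul_eq {𝕜 m n : Type*} [RCLike 𝕜]
    [Fintype m] [Fintype n] [DecidableEq m] [DecidableEq n]
    (Q : Matrix m n 𝕜) (h : Fintype.card n ≤ Fintype.card m) :
    ∃ Z : Matrix m n 𝕜, Function.Injective Z.mulVec ∧ Zᴴ * Q = Qᴴ * Q := by
  obtain ⟨g, hg, hgQ⟩ := (toEuclideanLin Q).exists_injective_adjoint_comp_eq (by simpa using h)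
  refine ⟨toEuclideanLin.symm g, ?_, toEuclideanLin.injective ?_⟩
  · have hZ : Function.Injective (toEuclideanLin (toEuclideanLin.symm g)) := by simpa using hg
    exact (WithLp.ofLp_injective 2).comp (hZ.comp (WithLp.toLp_injective 2))
  · simp only [toLpLin_mul_same, toEuclideanLin_conjTranspose_eq_adjoint,
      LinearEquiv.apply_symm_apply, hgQ]

theorem eventually_mulVec_injective_add_smul {m n : Type*} [Fintype n]
    (E Z : Matrix m n ℝ) (hZ : Function.Injective Z.mulVec) :
    ∀ᶠ t in 𝓝[>] (0 : ℝ), Function.Injective (E + t • Z).mulVec := by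
  have hfin : {t : ℝ | ¬ Function.Injective (E + t • Z).mulVec}.Finite := by
    refine (E.mulVecLin.finite_setOf_not_injective_add_smul Z.mulVecLin hZ).subset fun t ht => ?_
    have hlin : ⇑(E.mulVecLin + t • Z.mulVecLin) = (E + t • Z).mulVec := by
      funext v
      simp [add_mulVec, smul_mulVec]
    rwa [Set.mem_ofPred_eq, hlin]
  have hle : 𝓝[>] (0 : ℝ) ≤ cofinite :=
    (nhdsWithin_mono _ fun t ht => ne_of_gt ht).trans (nhdsNE_le_cofinite 0)
  exact (hfin.eventually_cofinite_notMem.filter_mono hle).mono fun t ht => not_not.mp ht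

section Perturbation

variable {m n : Type*} [Fintype m] {E Q Z : Matrix m n ℝ}

theorem transpose_mul_add_smul_eq (hZQ : Zᵀ * Q = Qᵀ * Q) (t : ℝ) :
    (E + t • Z)ᵀ * (Q + t • (E + t • Z)) =
      Eᵀ * Q + t • (Qᵀ * Q + (E + t • Z)ᵀ * (E + t • Z)) := by
  rw [Matrix.mul_add, transpose_add, Matrix.add_mul, transpose_smul, Matrix.smul_mul, hZQ,
    Matrix.mul_smul, smul_add, add_assoc]

theorem posDef_transpose_mul_add_smul [Fintype n] (hpsd : (Eᵀ * Q).PosSemidef)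
    (hZQ : Zᵀ * Q = Qᵀ * Q) {t : ℝ} (ht : 0 < t) (hinj : Function.Injective (E + t • Z).mulVec) :
    ((E + t • Z)ᵀ * (Q + t • (E + t • Z))).PosDef := by
  have hQQ : (Qᵀ * Q).PosSemidef := by simpa using posSemidef_conjTranspose_mul_self Q
  have hEt : ((E + t • Z)ᵀ * (E + t • Z)).PosDef := by
    simpa using PosDef.conjTranspose_mul_self _ hinj
  rw [transpose_mul_add_smul_eq hZQ]
  exact PosDef.posSemidef_add hpsd ((PosDef.posSemidef_add hQQ hEt).smul ht)

end Perturbation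

theorem transpose_mul_comm_of_posDef {m n : Type*} [Fintype m] {A B : Matrix m n ℝ}
    (h : (Aᵀ * B).PosDef) : Aᵀ * B = Bᵀ * A := by
  simpa [transpose_mul] using h.isHermitian.symm

end Matrix

section Pairs

variable {ℓ n : ℕ}

def pairOf (E Q : Matrix (Fin ℓ) (Fin n) ℝ) : PairIdx ℓ n → ℝ :=
  Sum.elim (fun p => E p.1 p.2) (fun p => Q p.1 p.2)

theorem pairOf_pE_pQ (x : PairIdx ℓ n → ℝ) : pairOf (pE x) (pQ x) = x := by
  funext i
  rcases i with _ | _ <;> rfl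

theorem Continuous.pairOf {α : Type*} [TopologicalSpace α] {E Q : α → Matrix (Fin ℓ) (Fin n) ℝ}
    (hE : Continuous E) (hQ : Continuous Q) : Continuous fun a => pairOf (E a) (Q a) := by
  refine continuous_pi fun i => ?_
  rcases i with ⟨i, j⟩ | ⟨i, j⟩
  exacts [hE.matrix_elem i j, hQ.matrix_elem i j]

theorem isAlgebraicSet_det_transpose_mul_eq_zero :
    IsAlgebraicSet {x : PairIdx ℓ n → ℝ | ((pE x)ᵀ * pQ x).det = 0} := by
  let XE : Matrix (Fin ℓ) (Fin n) (MvPolynomial (PairIdx ℓ n) ℝ) :=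
    of fun i j => MvPolynomial.X (Sum.inl (i, j))
  let XQ : Matrix (Fin ℓ) (Fin n) (MvPolynomial (PairIdx ℓ n) ℝ) :=
    of fun i j => MvPolynomial.X (Sum.inr (i, j))
  have heval (x : PairIdx ℓ n → ℝ) :
      MvPolynomial.eval x (XEᵀ * XQ).det = ((pE x)ᵀ * pQ x).det := by
    rw [RingHom.map_det, RingHom.mapMatrix_apply, Matrix.map_mul, transpose_map]
    congr 2 <;> ext <;> simp [XE, XQ, pE, pQ]
  exact ⟨1, fun _ => (XEᵀ * XQ).det, by simp [heval]⟩

theorem mem_closure_setOf_posDef (hℓn : n ≤ ℓ) {x : PairIdx ℓ n → ℝ}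
    (hpsd : ((pE x)ᵀ * pQ x).PosSemidef) :
    x ∈ closure {y : PairIdx ℓ n → ℝ |
      (pE y)ᵀ * pQ y = (pQ y)ᵀ * pE y ∧ ((pE y)ᵀ * pQ y).PosDef} := by
  obtain ⟨Z, hZ, hZQ⟩ :=
    (pQ x).exists_mulVec_injective_conjTranspose_mul_eq (by simpa using hℓn)
  rw [conjTranspose_eq_transpose_of_trivial, conjTranspose_eq_transpose_of_trivial] at hZQ
  let curve (t : ℝ) : PairIdx ℓ n → ℝ :=
    pairOf (pE x + t • Z) (pQ x + t • (pE x + t • Z))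
  have hcurve : Tendsto curve (𝓝[>] 0) (𝓝 x) := by
    have hcont : Continuous curve := Continuous.pairOf (by fun_prop) (by fun_prop)
    simpa [curve, pairOf_pE_pQ] using hcont.continuousWithinAt.tendsto (x := 0) (s := Set.Ioi 0)
  refine mem_closure_of_tendsto hcurve ?_
  filter_upwards [self_mem_nhdsWithin, (pE x).eventually_mulVec_injective_add_smul Z hZ]
    with t ht hinj
  have hpd := posDef_transpose_mul_add_smul hpsd hZQ ht hinj
  exact ⟨transpose_mul_comm_of_posDef hpd, hpd⟩

end Pairs

theorem posDef_relGeneric_in_posSemidef_pairs_general (ℓ n : ℕ) (hℓn : n ≤ ℓ) :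
    RelGeneric
      {x : PairIdx ℓ n → ℝ |
        (pE x)ᵀ * pQ x = (pQ x)ᵀ * pE x ∧ ((pE x)ᵀ * pQ x).PosDef}
      {x : PairIdx ℓ n → ℝ |
        (pE x)ᵀ * pQ x = (pQ x)ᵀ * pE x ∧ ((pE x)ᵀ * pQ x).PosSemidef} := by
  refine ⟨_, isAlgebraicSet_det_transpose_mul_eq_zero, ?_, fun x hx => ?_⟩
  · rintro x ⟨hxS, hx⟩
    refine ⟨of_not_not fun hdet => hxS ⟨hx.1, ?_⟩, hx⟩
    exact hx.2.posDef_iff_det_ne_zero.mpr hdet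
  · refine closure_mono ?_ (mem_closure_setOf_posDef hℓn hx.2)
    rintro y ⟨hsym, hpd⟩
    exact ⟨hpd.det_pos.ne', hsym, hpd.posSemidef⟩

/-- for `ℓ ≥ n ≥ 1`, the set `{(E,Q) : EᵀQ = QᵀE > 0}` is
relative generic in `{(E,Q) : EᵀQ = QᵀE ≥ 0}`. -/
theorem posDef_relGeneric_in_posSemidef_pairs (ℓ n : ℕ) (hn : 1 ≤ n) (hℓn : n ≤ ℓ) :
    RelGeneric
      {x : PairIdx ℓ n → ℝ |
        (pE x)ᵀ * pQ x = (pQ x)ᵀ * pE x ∧ ((pE x)ᵀ * pQ x).PosDef}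
      {x : PairIdx ℓ n → ℝ |
        (pE x)ᵀ * pQ x = (pQ x)ᵀ * pE x ∧ ((pE x)ᵀ * pQ x).PosSemidef} :=
  posDef_relGeneric_in_posSemidef_pairs_general ℓ n hℓn
end

section
/- Let ℓ, n, m ∈ ℕ, all ≥ 1. The set S = {(E,J,Q,B) ∈ Σ^H_{ℓ,n,m} : rank[E, B] = min{ℓ, n+m}} is relative generic in Σ^H_{ℓ,n,m}, where [E, B] ∈ ℝ^{ℓ×(n+m)} is the block matrix with blocks E and B. -/
/-! The points where `rank [E, B]` drops are cut out by the maximal minors of `[E, B]`, hence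
form an algebraic set. For density, move a point of `Σ^H` along `(E, B) ↦ (E + tM, B + tB₀)`
where `MᵀQ = QᵀQ`: then `(E + tM)ᵀQ = EᵀQ + t QᵀQ` stays symmetric positive semidefinite for
`t ≥ 0`. A column-exchange argument, based on `range Q ⊔ ker Qᵀ = ⊤`, produces such `M` and `B₀`
with `[M, B₀]` of full rank; a nonzero maximal minor of `[M, B₀]` is the leading coefficient of
the corresponding minor of `[E + tM, B + tB₀]`, a polynomial in `t`, which therefore vanishes only
for finitely many `t`. -/

open Matrix

/-- Coordinates of the product `ℝ^{ℓ×n} × ℝ^{ℓ×ℓ} × ℝ^{ℓ×n} × ℝ^{ℓ×m}`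
of matrix spaces, hosting the tuples `(E, J, Q, B)`. -/
abbrev IdxH (ℓ n m : ℕ) :=
  (Fin ℓ × Fin n) ⊕ (Fin ℓ × Fin ℓ) ⊕ (Fin ℓ × Fin n) ⊕ (Fin ℓ × Fin m)

/-- The matrix `E` of a tuple `(E, J, Q, B)`. -/
def mE {ℓ n m : ℕ} (x : IdxH ℓ n m → ℝ) : Matrix (Fin ℓ) (Fin n) ℝ :=
  Matrix.of fun i j => x (Sum.inl (i, j))

/-- The matrix `J` of a tuple `(E, J, Q, B)`. -/
def mJ {ℓ n m : ℕ} (x : IdxH ℓ n m → ℝ) : Matrix (Fin ℓ) (Fin ℓ) ℝ :=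
  Matrix.of fun i j => x (Sum.inr (Sum.inl (i, j)))

/-- The matrix `Q` of a tuple `(E, J, Q, B)`. -/
def mQ {ℓ n m : ℕ} (x : IdxH ℓ n m → ℝ) : Matrix (Fin ℓ) (Fin n) ℝ :=
  Matrix.of fun i j => x (Sum.inr (Sum.inr (Sum.inl (i, j))))

/-- The matrix `B` of a tuple `(E, J, Q, B)`. -/
def mB {ℓ n m : ℕ} (x : IdxH ℓ n m → ℝ) : Matrix (Fin ℓ) (Fin m) ℝ :=
  Matrix.of fun i j => x (Sum.inr (Sum.inr (Sum.inr (i, j))))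

/-- The set `Σ^H_{ℓ,n,m}` of (conservative) port-Hamiltonian tuples
`(E, J, Q, B)` with `Jᵀ = -J` and `EᵀQ = QᵀE ≥ 0`. -/
def SigmaH (ℓ n m : ℕ) : Set (IdxH ℓ n m → ℝ) :=
  {x | (mJ x)ᵀ = -(mJ x) ∧ (mE x)ᵀ * mQ x = (mQ x)ᵀ * mE x ∧
       ((mE x)ᵀ * mQ x).PosSemidef}

open Module Submodule Set Filter Topology

namespace Matrix

variable {K m n : Type*} [Field K] [Fintype n]

theorem le_rank_of_det_submatrix_ne_zero (A : Matrix m n K) {k : ℕ} {ρ : Fin k → m}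
    {γ : Fin k → n} (h : (A.submatrix ρ γ).det ≠ 0) : k ≤ A.rank := by
  simpa [rank_of_det_ne_zero h] using A.rank_submatrix_le ρ γ

theorem exists_linearIndependent_col_submatrix (A : Matrix m n K) {k : ℕ} (hk : k ≤ A.rank) :
    ∃ γ : Fin k → n, LinearIndependent K (A.submatrix id γ).col := by
  obtain ⟨κ, a, ha, hspan, hli⟩ := exists_linearIndependent' K A.col
  have : Finite κ := Finite.of_injective a ha
  have : Fintype κ := Fintype.ofFinite κ
  have hcard : Fintype.card κ = A.rank := by
    rw [A.rank_eq_finrank_span_cols, ← hspan, finrank_span_eq_card hli]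
  let e : Fin k ↪ κ := (Fin.castLEEmb (hcard ▸ hk)).trans (Fintype.equivFin κ).symm.toEmbedding
  exact ⟨a ∘ e, hli.comp e e.injective⟩

theorem le_rank_iff_exists_det_submatrix_ne_zero [Fintype m] (A : Matrix m n K) {k : ℕ} :
    k ≤ A.rank ↔ ∃ (ρ : Fin k → m) (γ : Fin k → n), (A.submatrix ρ γ).det ≠ 0 := by
  refine ⟨fun hk => ?_, fun ⟨ρ, γ, h⟩ => A.le_rank_of_det_submatrix_ne_zero h⟩
  obtain ⟨γ, hγ⟩ := A.exists_linearIndependent_col_submatrix hk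
  have hrank : (A.submatrix id γ)ᵀ.rank = k := by
    simpa using hγ.rank_matrix (M := (A.submatrix id γ)ᵀ)
  obtain ⟨ρ, hρ⟩ := (A.submatrix id γ)ᵀ.exists_linearIndependent_col_submatrix hrank.ge
  refine ⟨ρ, γ, ?_⟩
  have hunit : IsUnit (A.submatrix ρ γ) := linearIndependent_rows_iff_isUnit.mp hρ
  exact ((isUnit_iff_isUnit_det _).mp hunit).ne_zero

open Polynomial in
theorem eventually_cofinite_det_add_smul_ne_zero {ι : Type*} [Fintype ι] [DecidableEq ι]
    (A D : Matrix ι ι K) (hD : D.det ≠ 0) :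
    ∀ᶠ t : K in cofinite, (A + t • D).det ≠ 0 := by
  let P : K[X] := det ((X : K[X]) • D.map C + A.map C)
  have hP : P ≠ 0 := fun h => hD <| by
    rw [← coeff_det_X_add_C_card D A]
    exact congrArg (coeff · _) h
  have heval (t : K) : P.eval t = (A + t • D).det := by
    rw [← coe_evalRingHom, RingHom.map_det, add_comm]
    congr 1
    ext i j
    simp only [RingHom.mapMatrix_apply, map_apply, add_apply, smul_apply, smul_eq_mul,
      coe_evalRingHom, eval_add, eval_mul, eval_X, eval_C]
  filter_upwards [eventually_cofinite_not_isRoot hP] with t ht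
  rwa [IsRoot.def, heval] at ht

end Matrix

theorem isAlgebraicSet_setOf_forall_eval_eq_zero {ι σ : Type} [Fintype ι] [Fintype σ]
    (p : σ → MvPolynomial ι ℝ) : IsAlgebraicSet {x | ∀ s, MvPolynomial.eval x (p s) = 0} := by
  refine ⟨Fintype.card σ, p ∘ (Fintype.equivFin σ).symm, ?_⟩
  ext x
  exact (Fintype.equivFin σ).symm.forall_congr_right.symm

theorem isAlgebraicSet_setOf_rank_lt {ι r c : Type} [Fintype ι] [Fintype r] [Fintype c]
    [DecidableEq r] [DecidableEq c]
    (P : Matrix r c (MvPolynomial ι ℝ)) (k : ℕ) :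
    IsAlgebraicSet {x | (P.map (MvPolynomial.eval x)).rank < k} := by
  convert isAlgebraicSet_setOf_forall_eval_eq_zero
    fun ργ : (Fin k → r) × (Fin k → c) => (P.submatrix ργ.1 ργ.2).det using 1
  ext x
  rw [Set.mem_ofPred_eq, ← not_le, le_rank_iff_exists_det_submatrix_ne_zero]
  simp [RingHom.map_det, submatrix_map]

section Exchange

variable {K V ι : Type*} [Field K] [AddCommGroup V] [Module K V] [FiniteDimensional K V]
  [Fintype ι]

theorem exists_mem_finrank_span_range_gt (A : ι → Set V)
    (hA : ∀ g : ι → V, (∀ c, g c ∈ A c) → ∀ c, A c ⊆ span K (range g) → span K (range g) = ⊤)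
    {g : ι → V} (hg : ∀ c, g c ∈ A c)
    (hlt : finrank K (span K (range g)) < min (finrank K V) (Fintype.card ι)) :
    ∃ g' : ι → V, (∀ c, g' c ∈ A c) ∧
      finrank K (span K (range g)) < finrank K (span K (range g')) := by
  classical
  have hdep : ¬ LinearIndependent K g := fun hli =>
    (finrank_span_eq_card hli ▸ hlt).not_ge (min_le_right _ _)
  obtain ⟨c₀, hc₀⟩ : ∃ c₀, g c₀ ∈ span K (g '' (univ \ {c₀})) := by
    simpa [linearIndependent_iff_notMem_span] using hdep
  have hne : span K (range g) ≠ ⊤ := fun htop =>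
    (htop ▸ hlt).not_ge ((finrank_top K V).symm ▸ min_le_left _ _)
  obtain ⟨v, hvA, hvT⟩ : ∃ v ∈ A c₀, v ∉ span K (range g) :=
    not_subset.mp fun hsub => hne (hA g hg c₀ hsub)
  set g' := Function.update g c₀ v
  refine ⟨g', fun c => ?_, finrank_lt_finrank_of_lt (lt_of_le_of_ne ?_ ?_)⟩
  · rcases eq_or_ne c c₀ with rfl | hc
    · simpa [g'] using hvA
    · simpa [g', hc] using hg c
  · have hsub : g '' (univ \ {c₀}) ⊆ range g' := by
      rintro _ ⟨c, hc, rfl⟩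
      exact ⟨c, Function.update_of_ne (by simpa using hc) _ _⟩
    refine span_le.mpr (range_subset_iff.mpr fun c => ?_)
    rcases eq_or_ne c c₀ with rfl | hc
    · exact span_mono hsub hc₀
    · exact subset_span ⟨c, Function.update_of_ne hc _ _⟩
  · exact fun h => hvT (h ▸ subset_span ⟨c₀, Function.update_self _ _ _⟩)

theorem exists_mem_finrank_span_range_eq_min (A : ι → Set V) (hne : ∀ c, (A c).Nonempty)
    (hA : ∀ g : ι → V, (∀ c, g c ∈ A c) → ∀ c, A c ⊆ span K (range g) → span K (range g) = ⊤) :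
    ∃ g : ι → V, (∀ c, g c ∈ A c) ∧
      finrank K (span K (range g)) = min (finrank K V) (Fintype.card ι) := by
  have hreach (r : ℕ) (hr : r ≤ min (finrank K V) (Fintype.card ι)) :
      ∃ g : ι → V, (∀ c, g c ∈ A c) ∧ r ≤ finrank K (span K (range g)) := by
    induction r with
    | zero => exact ⟨fun c => (hne c).some, fun c => (hne c).some_mem, Nat.zero_le _⟩
    | succ r ih =>
      obtain ⟨g, hg, hrg⟩ := ih (by omega)
      rcases hrg.lt_or_eq with hlt | rfl
      · exact ⟨g, hg, hlt⟩
      · exact exists_mem_finrank_span_range_gt A hA hg hr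
  obtain ⟨g, hg, hle⟩ := hreach _ le_rfl
  exact ⟨g, hg, le_antisymm (le_min (finrank_le _) (finrank_range_le_card g)) hle⟩

end Exchange

namespace Matrix

variable {K l n : Type*} [Field K] [LinearOrder K] [IsStrictOrderedRing K] [Fintype l] [Fintype n]

theorem range_mulVecLin_sup_ker_mulVecLin_transpose (Q : Matrix l n K) :
    LinearMap.range Q.mulVecLin ⊔ LinearMap.ker Qᵀ.mulVecLin = ⊤ := by
  have hrange : LinearMap.range (Qᵀ * Q).mulVecLin = LinearMap.range Qᵀ.mulVecLin :=
    eq_of_le_of_finrank_eq (mulVecLin_mul Qᵀ Q ▸ LinearMap.range_comp_le_range _ _)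
      (by simpa [rank] using (rank_transpose_mul_self Q).trans (rank_transpose Q).symm)
  refine eq_top_iff'.mpr fun v => ?_
  obtain ⟨w, hw⟩ : Qᵀ *ᵥ v ∈ LinearMap.range (Qᵀ * Q).mulVecLin := hrange ▸ ⟨v, rfl⟩
  rw [← add_sub_cancel (Q *ᵥ w) v]
  refine add_mem_sup ⟨w, rfl⟩ ?_
  rw [mulVecLin_apply] at hw
  rw [LinearMap.mem_ker, mulVecLin_apply, mulVec_sub, mulVec_mulVec, hw, sub_self]

theorem exists_transpose_mul_eq_and_rank_fromCols_eq_min (Q : Matrix l n K) (m : Type*)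
    [Fintype m] : ∃ (M : Matrix l n K) (B₀ : Matrix l m K), Mᵀ * Q = Qᵀ * Q ∧
      (fromCols M B₀).rank = min (Fintype.card l) (Fintype.card n + Fintype.card m) := by
  let A : n ⊕ m → Set (l → K) :=
    Sum.elim (fun j => {v | Qᵀ *ᵥ v = Qᵀ *ᵥ Q.col j}) (fun _ => univ)
  have hne (c : n ⊕ m) : (A c).Nonempty := by
    cases c with
    | inl j => exact ⟨Q.col j, rfl⟩
    | inr b => exact univ_nonempty
  have hA (g : n ⊕ m → l → K) (hg : ∀ c, g c ∈ A c) (c : n ⊕ m)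
      (hc : A c ⊆ span K (range g)) : span K (range g) = ⊤ := by
    cases c with
    | inr b => exact eq_top_iff.mpr fun v _ => hc (mem_univ v)
    | inl j =>
      have hker : LinearMap.ker Qᵀ.mulVecLin ≤ span K (range g) := fun u hu => by
        have h1 : Q.col j + u ∈ span K (range g) := hc <| by
          rw [LinearMap.mem_ker, mulVecLin_apply] at hu
          show Qᵀ *ᵥ (Q.col j + u) = _
          rw [mulVec_add, hu, add_zero]
        simpa using sub_mem h1 (hc (show Q.col j ∈ A (.inl j) from rfl))
      have hcols : LinearMap.range Q.mulVecLin ≤ span K (range g) := by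
        rw [range_mulVecLin, span_le]
        rintro _ ⟨j', rfl⟩
        rw [← sub_sub_cancel (g (.inl j')) (Q.col j')]
        refine sub_mem (subset_span ⟨_, rfl⟩) (hker ?_)
        rw [LinearMap.mem_ker, mulVecLin_apply, mulVec_sub, sub_eq_zero]
        exact hg (.inl j')
      exact eq_top_iff.mpr (range_mulVecLin_sup_ker_mulVecLin_transpose Q ▸ sup_le hcols hker)
  obtain ⟨g, hg, hrank⟩ := exists_mem_finrank_span_range_eq_min A hne hA
  let C : Matrix l (n ⊕ m) K := (of g)ᵀ
  have hQC : Qᵀ * C.toCols₁ = Qᵀ * Q := by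
    ext i j
    simpa [mulVec, mul_apply, dotProduct, C] using congrFun (hg (.inl j)) i
  refine ⟨C.toCols₁, C.toCols₂, ?_, ?_⟩
  · simpa using congrArg transpose hQC
  · rw [fromCols_toCols, rank_eq_finrank_span_cols, ← Fintype.card_sum]
    rwa [finrank_fintype_fun_eq_card] at hrank

end Matrix

section PortHamiltonian

variable {ℓ n m : ℕ}

def tupleH (E : Matrix (Fin ℓ) (Fin n) ℝ) (J : Matrix (Fin ℓ) (Fin ℓ) ℝ)
    (Q : Matrix (Fin ℓ) (Fin n) ℝ) (B : Matrix (Fin ℓ) (Fin m) ℝ) : IdxH ℓ n m → ℝ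
  | .inl (i, j) => E i j
  | .inr (.inl (i, j)) => J i j
  | .inr (.inr (.inl (i, j))) => Q i j
  | .inr (.inr (.inr (i, j))) => B i j

variable (x : IdxH ℓ n m → ℝ) (t : ℝ) (E : Matrix (Fin ℓ) (Fin n) ℝ) (J : Matrix (Fin ℓ) (Fin ℓ) ℝ)
  (Q : Matrix (Fin ℓ) (Fin n) ℝ) (B : Matrix (Fin ℓ) (Fin m) ℝ)

theorem mJ_add_smul_tupleH : mJ (x + t • tupleH E J Q B) = mJ x + t • J := rfl

theorem mQ_add_smul_tupleH : mQ (x + t • tupleH E J Q B) = mQ x + t • Q := rfl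

theorem mE_add_smul_tupleH : mE (x + t • tupleH E J Q B) = mE x + t • E := rfl

theorem fromCols_add_smul_tupleH :
    fromCols (mE (x + t • tupleH E J Q B)) (mB (x + t • tupleH E J Q B)) =
      fromCols (mE x) (mB x) + t • fromCols E B := by
  ext i (j | j) <;> rfl

end PortHamiltonian

theorem add_smul_tupleH_mem_SigmaH {ℓ n m : ℕ} {x : IdxH ℓ n m → ℝ} (hx : x ∈ SigmaH ℓ n m)
    {M : Matrix (Fin ℓ) (Fin n) ℝ} (hM : Mᵀ * mQ x = (mQ x)ᵀ * mQ x)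
    (B₀ : Matrix (Fin ℓ) (Fin m) ℝ) {t : ℝ} (ht : 0 ≤ t) :
    x + t • tupleH M 0 0 B₀ ∈ SigmaH ℓ n m := by
  obtain ⟨hJ, hsymm, hpsd⟩ := hx
  have hM' : (mQ x)ᵀ * M = (mQ x)ᵀ * mQ x := by simpa using congrArg transpose hM
  have hEQ : (mE x + t • M)ᵀ * mQ x = (mE x)ᵀ * mQ x + t • ((mQ x)ᵀ * mQ x) := by
    rw [transpose_add, transpose_smul, Matrix.add_mul, Matrix.smul_mul, hM]
  simp only [SigmaH, Set.mem_ofPred_eq, mJ_add_smul_tupleH, mQ_add_smul_tupleH,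
    mE_add_smul_tupleH, smul_zero, add_zero]
  rw [hEQ, Matrix.mul_add, Matrix.mul_smul, hM', ← hsymm]
  refine ⟨hJ, rfl, hpsd.add (PosSemidef.smul ?_ ht)⟩
  simpa using posSemidef_conjTranspose_mul_self (mQ x)

noncomputable def genericEB (ℓ n m : ℕ) :
    Matrix (Fin ℓ) (Fin n ⊕ Fin m) (MvPolynomial (IdxH ℓ n m) ℝ) :=
  fromCols (of fun i j => .X (.inl (i, j))) (of fun i j => .X (.inr (.inr (.inr (i, j)))))

theorem genericEB_map_eval {ℓ n m : ℕ} (x : IdxH ℓ n m → ℝ) :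
    (genericEB ℓ n m).map (MvPolynomial.eval x) = fromCols (mE x) (mB x) := by
  ext i (j | j) <;> simp [genericEB, mE, mB]

theorem SigmaH_subset_closure_min_le_rank (ℓ n m : ℕ) :
    SigmaH ℓ n m ⊆
      closure {x ∈ SigmaH ℓ n m | min ℓ (n + m) ≤ (fromCols (mE x) (mB x)).rank} := by
  intro x hx
  obtain ⟨M, B₀, hM, hrank⟩ := (mQ x).exists_transpose_mul_eq_and_rank_fromCols_eq_min (Fin m)
  simp only [Fintype.card_fin] at hrank
  obtain ⟨ρ, γ, hdet⟩ := (fromCols M B₀).le_rank_iff_exists_det_submatrix_ne_zero.mp hrank.ge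
  have hline : Tendsto (fun t : ℝ => x + t • tupleH M 0 0 B₀) (𝓝[>] 0) (𝓝 x) := by
    refine tendsto_nhdsWithin_of_tendsto_nhds ?_
    simpa using ((continuous_id.smul continuous_const).const_add x).tendsto (0 : ℝ)
  have hright : 𝓝[>] (0 : ℝ) ≤ cofinite :=
    (nhdsWithin_mono _ fun t (ht : 0 < t) => ht.ne').trans (nhdsNE_le_cofinite 0)
  have hminor := (((fromCols (mE x) (mB x)).submatrix ρ γ).eventually_cofinite_det_add_smul_ne_zero
    _ hdet).filter_mono hright
  refine mem_closure_of_tendsto hline ?_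
  filter_upwards [self_mem_nhdsWithin, hminor] with t (ht : 0 < t) hdet_t
  refine ⟨add_smul_tupleH_mem_SigmaH hx hM B₀ ht.le, ?_⟩
  rw [fromCols_add_smul_tupleH, le_rank_iff_exists_det_submatrix_ne_zero]
  exact ⟨ρ, γ, hdet_t⟩

theorem rank_EB_relGeneric_in_SigmaH_general (ℓ n m : ℕ) :
    RelGeneric
      {x ∈ SigmaH ℓ n m | (Matrix.fromCols (mE x) (mB x)).rank = min ℓ (n + m)}
      (SigmaH ℓ n m) := by
  have hle (x : IdxH ℓ n m → ℝ) : (fromCols (mE x) (mB x)).rank ≤ min ℓ (n + m) :=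
    le_min (by simpa using (fromCols (mE x) (mB x)).rank_le_card_height)
      (by simpa using (fromCols (mE x) (mB x)).rank_le_card_width)
  refine ⟨{x | (fromCols (mE x) (mB x)).rank < min ℓ (n + m)}, ?_, ?_, ?_⟩
  · simpa only [genericEB_map_eval] using isAlgebraicSet_setOf_rank_lt (genericEB ℓ n m) _
  · rintro x ⟨hxS, hxV⟩
    exact ⟨(hle x).lt_of_ne fun h => hxS ⟨hxV, h⟩, hxV⟩
  · refine (SigmaH_subset_closure_min_le_rank ℓ n m).trans (closure_mono ?_)
    rintro x ⟨hxV, hx⟩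
    exact ⟨not_lt.mpr hx, hxV⟩

/-- `{(E,J,Q,B) ∈ Σ^H : rank [E, B] = min ℓ (n+m)}` is relative
generic in `Σ^H_{ℓ,n,m}`. -/
theorem rank_EB_relGeneric_in_SigmaH (ℓ n m : ℕ) (hℓ : 1 ≤ ℓ) (hn : 1 ≤ n) (hm : 1 ≤ m) :
    RelGeneric
      {x ∈ SigmaH ℓ n m | (Matrix.fromCols (mE x) (mB x)).rank = min ℓ (n + m)}
      (SigmaH ℓ n m) :=
  rank_EB_relGeneric_in_SigmaH_general ℓ n m
end

section
/- Let ℓ, n, m ∈ ℕ, all ≥ 1, and let S^H_{fi} = {(E,J,Q,B) ∈ Σ^H_{ℓ,n,m} : rank[E, B] = rank[E, JQ, B]} be the set of freely initializable port-Hamiltonian descriptor systems. Then S^H_{fi} is relative generic in Σ^H_{ℓ,n,m} if, and only if, ℓ ≤ n+m; moreover, if ℓ > n+m, then the complement of S^H_{fi} is relative generic in Σ^H_{ℓ,n,m}. -/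
open Matrix

/-!
Off the zero set of `det ([E, B] [E, B]ᵀ)` the matrix `[E, B]` has rank `ℓ`, hence so does
`[E, JQ, B]`. For `ℓ ≤ n + m` this zero set is thin in `Σ^H`: moving `E` along `Q + F` with
`Fᵀ Q = 0` keeps `Eᵀ Q` symmetric positive semidefinite, for suitable `F` and a direction `C` of `B`
the matrix `[Q + F, C]` has full rank, so by homogeneity the determinant does not vanish identically
on the line, and then it vanishes only at isolated points of it.

For `ℓ > n + m` the same moves make `[E, B]` injective. Then there are `u ≠ 0` orthogonal to the
range of `[E, B]` and `w ≠ 0` in `ker Eᵀ` with `u ⊥ w`; perturbing `J` by `δ (u wᵀ - w uᵀ)` and `Q`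
by `δ w eⱼᵀ` stays in `Σ^H` and makes `uᵀ (JQ)ⱼ` a quadratic in `δ` with leading coefficient
`|u|² |w|²`. Where it does not vanish, `[E, B, (JQ)ⱼ]` has full column rank `n + m + 1`, more than
`rank [E, B]`. A set and its complement are never both relative generic in a nonempty set, because
algebraic sets are closed.
-/

section LinearAlgebra

open Module LinearMap

namespace LinearMap

variable {K V W : Type*} [Field K] [AddCommGroup V] [Module K V] [FiniteDimensional K V]
  [AddCommGroup W] [Module K W] [FiniteDimensional K W] {f : V →ₗ[K] W} {N : Submodule K W}

theorem finrank_ker_add_eq_of_isCompl (hN : IsCompl (range f) N) :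
    finrank K (ker f) + finrank K W = finrank K V + finrank K N := by
  have := f.finrank_range_add_finrank_ker
  have := Submodule.finrank_add_eq_of_isCompl hN
  omega

theorem exists_injective_add_of_isCompl (hN : IsCompl (range f) N)
    (h : finrank K V ≤ finrank K W) :
    ∃ ψ : V →ₗ[K] W, range ψ ≤ N ∧ Function.Injective (f + ψ) := by
  obtain ⟨ψ₀, hψ₀⟩ : ∃ ψ₀ : ker f →ₗ[K] N, Function.Injective ψ₀ :=
    finrank_le_iff_exists_linearMap.mp (by have := finrank_ker_add_eq_of_isCompl hN; omega)
  obtain ⟨ψ, hψ⟩ := LinearMap.exists_extend ψ₀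
  refine ⟨N.subtype ∘ₗ ψ, fun _ ⟨v, hv⟩ => hv ▸ (ψ v).2, ?_⟩
  rw [← LinearMap.ker_eq_bot, LinearMap.ker_eq_bot']
  intro v hv
  have hfv : f v = 0 := by
    have hmem : f v ∈ range f ⊓ N :=
      ⟨mem_range_self f v, by
        rw [eq_neg_of_add_eq_zero_left hv]; exact N.neg_mem (ψ v).2⟩
    simpa [hN.inf_eq_bot] using hmem
  have hψv : ψ₀ ⟨v, hfv⟩ = 0 := by
    rw [← hψ]; simpa [hfv] using hv
  exact congrArg Subtype.val (hψ₀ (hψv.trans (map_zero ψ₀).symm))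

theorem exists_surjective_add_of_isCompl (hN : IsCompl (range f) N)
    (h : finrank K W ≤ finrank K V) :
    ∃ ψ : V →ₗ[K] W, range ψ ≤ N ∧ Function.Surjective (f + ψ) := by
  obtain ⟨φ, hφ⟩ : ∃ φ : N →ₗ[K] ker f, Function.Injective φ :=
    finrank_le_iff_exists_linearMap.mp (by have := finrank_ker_add_eq_of_isCompl hN; omega)
  obtain ⟨ψ₀, hψ₀⟩ := φ.exists_leftInverse_of_injective (ker_eq_bot.mpr hφ)
  obtain ⟨ψ, hψ⟩ := LinearMap.exists_extend ψ₀
  refine ⟨N.subtype ∘ₗ ψ, fun _ ⟨v, hv⟩ => hv ▸ (ψ v).2, ?_⟩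
  rw [← LinearMap.range_eq_top, eq_top_iff, ← hN.sup_eq_top, sup_le_iff]
  have hN_le : N ≤ range (f + N.subtype ∘ₗ ψ) := by
    intro w hw
    refine ⟨φ ⟨w, hw⟩, ?_⟩
    have h1 : ψ (φ ⟨w, hw⟩) = ⟨w, hw⟩ := by
      change (ψ ∘ₗ (ker f).subtype) (φ ⟨w, hw⟩) = _
      rw [hψ, ← LinearMap.comp_apply, hψ₀, LinearMap.id_apply]
    simp [h1]
  refine ⟨?_, hN_le⟩
  rintro _ ⟨v, rfl⟩
  have h1 : f v = (f + N.subtype ∘ₗ ψ) v - N.subtype (ψ v) := by simp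
  rw [h1]
  exact Submodule.sub_mem _ (mem_range_self _ v) (hN_le (ψ v).2)

end LinearMap

namespace Matrix

theorem fromCols_smul {R α β γ : Type*} [SMul R R] (c : R) (A : Matrix α β R)
    (B : Matrix α γ R) : fromCols (c • A) (c • B) = c • fromCols A B := by
  ext i (j | j) <;> rfl

variable {α β K : Type*} [Fintype β] [Field K]

theorem rank_eq_card_width_iff (A : Matrix α β K) :
    A.rank = Fintype.card β ↔ ∀ z, A *ᵥ z = 0 → z = 0 := by
  have := A.mulVecLin.finrank_range_add_finrank_ker
  rw [finrank_fintype_fun_eq_card] at this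
  rw [← ker_mulVecLin_eq_bot_iff, ← Submodule.finrank_eq_zero, rank]
  omega

variable [Fintype α]

theorem det_ne_zero_iff_rank_eq [DecidableEq α] (A : Matrix α α K) :
    A.det ≠ 0 ↔ A.rank = Fintype.card α := by
  rw [rank_eq_card_width_iff, Ne, ← exists_mulVec_eq_zero_iff]
  simp only [not_exists, not_and, not_imp_not]

theorem det_mul_transpose_ne_zero_iff [DecidableEq α] (A : Matrix α β ℝ) :
    (A * Aᵀ).det ≠ 0 ↔ A.rank = Fintype.card α := by
  rw [det_ne_zero_iff_rank_eq, rank_self_mul_transpose]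

theorem det_transpose_mul_ne_zero_iff [DecidableEq β] (A : Matrix α β ℝ) :
    (Aᵀ * A).det ≠ 0 ↔ A.rank = Fintype.card β := by
  rw [det_ne_zero_iff_rank_eq, rank_transpose_mul_self]

theorem exists_ne_zero_vecMul_eq_zero (A : Matrix α β K) (h : Fintype.card β < Fintype.card α) :
    ∃ u ≠ 0, u ᵥ* A = 0 := by
  have hker : ker Aᵀ.mulVecLin ≠ ⊥ := ker_ne_bot_of_finrank_lt (by simpa using h)
  obtain ⟨u, hu, hu0⟩ := Submodule.exists_mem_ne_zero_of_ne_bot hker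
  exact ⟨u, hu0, by simpa [mulVec_transpose] using hu⟩

theorem rank_fromCols_replicateCol {A : Matrix α β K} {u v : α → K}
    (hA : A.rank = Fintype.card β) (huA : u ᵥ* A = 0) (huv : u ⬝ᵥ v ≠ 0) :
    (fromCols A (replicateCol Unit v)).rank = Fintype.card β + 1 := by
  rw [rank_eq_card_width_iff] at hA
  rw [← Fintype.card_unit, ← Fintype.card_sum, rank_eq_card_width_iff]
  intro z hz
  have hsplit :
      fromCols A (replicateCol Unit v) *ᵥ z = A *ᵥ (z ∘ Sum.inl) + z (Sum.inr ()) • v := by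
    ext i
    simp [mulVec, dotProduct, replicateCol_apply, mul_comm]
  rw [hsplit] at hz
  have hlast : z (Sum.inr ()) = 0 := by
    have := congrArg (u ⬝ᵥ ·) hz
    simpa [dotProduct_add, dotProduct_mulVec, huA, huv] using this
  rw [hlast, zero_smul, add_zero] at hz
  have hfirst := hA _ hz
  ext (i | i)
  · exact congr_fun hfirst i
  · exact hlast

theorem isCompl_range_mulVecLin_ker_transpose (A : Matrix α β ℝ) :
    IsCompl (range A.mulVecLin) (ker Aᵀ.mulVecLin) := by
  rw [Submodule.isCompl_iff_disjoint]
  · rw [Submodule.disjoint_def]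
    rintro _ ⟨x, rfl⟩ hx
    have hx' : x ∈ ker (Aᵀ * A).mulVecLin := by
      simpa only [mem_ker, mulVecLin_apply, ← mulVec_mulVec] using hx
    rwa [ker_mulVecLin_transpose_mul_self] at hx'
  · have := Aᵀ.mulVecLin.finrank_range_add_finrank_ker
    rw [← rank, rank_transpose] at this
    rw [← rank]
    omega

theorem exists_transpose_mul_eq_zero_rank_add (A : Matrix α β ℝ) :
    ∃ G : Matrix α β ℝ, Aᵀ * G = 0 ∧ (A + G).rank = min (Fintype.card α) (Fintype.card β) := by
  classical
  have hN := isCompl_range_mulVecLin_ker_transpose A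
  have mulVecLin_toMatrix' (ψ : (β → ℝ) →ₗ[ℝ] α → ℝ) : (LinearMap.toMatrix' ψ).mulVecLin = ψ := by
    rw [← toLin'_apply', toLin'_toMatrix']
  have htranspose {ψ : (β → ℝ) →ₗ[ℝ] α → ℝ} (hψ : range ψ ≤ ker Aᵀ.mulVecLin) :
      Aᵀ * LinearMap.toMatrix' ψ = 0 := by
    apply toLin'.injective
    rw [toLin'_apply', mulVecLin_mul, mulVecLin_toMatrix', range_le_ker_iff.mp hψ, map_zero]
  rcases le_total (Fintype.card β) (Fintype.card α) with h | h
  · obtain ⟨ψ, hψN, hinj⟩ := LinearMap.exists_injective_add_of_isCompl hN (by simpa using h)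
    refine ⟨LinearMap.toMatrix' ψ, htranspose hψN, ?_⟩
    rw [min_eq_right h, rank, mulVecLin_add, mulVecLin_toMatrix', finrank_range_of_inj hinj,
      finrank_fintype_fun_eq_card]
  · obtain ⟨ψ, hψN, hsurj⟩ := LinearMap.exists_surjective_add_of_isCompl hN (by simpa using h)
    refine ⟨LinearMap.toMatrix' ψ, htranspose hψN, ?_⟩
    rw [min_eq_left h, rank, mulVecLin_add, mulVecLin_toMatrix', range_eq_top.mpr hsurj,
      finrank_top, finrank_fintype_fun_eq_card]

theorem exists_transpose_mul_eq_zero_rank_fromCols (Q : Matrix α β ℝ) (γ : Type*) [Fintype γ] :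
    ∃ (F : Matrix α β ℝ) (C : Matrix α γ ℝ), Qᵀ * F = 0 ∧
      (fromCols (Q + F) C).rank = min (Fintype.card α) (Fintype.card β + Fintype.card γ) := by
  obtain ⟨G, hG, hrank⟩ := exists_transpose_mul_eq_zero_rank_add (fromCols Q (0 : Matrix α γ ℝ))
  refine ⟨G.toCols₁, G.toCols₂, ?_, ?_⟩
  · ext i j
    simpa [transpose_fromCols, fromRows_mul, mul_apply] using congr_fun₂ hG (Sum.inl i) (Sum.inl j)
  · have hsplit : fromCols (Q + G.toCols₁) G.toCols₂ = fromCols Q 0 + G := by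
      ext i (j | j) <;> simp
    rwa [hsplit, ← Fintype.card_sum]

theorem posSemidef_add_transpose_mul {Q F : Matrix α β ℝ} (hF : Qᵀ * F = 0) :
    ((Q + F)ᵀ * Q).PosSemidef := by
  have hFQ : Fᵀ * Q = 0 := by simpa using congrArg transpose hF
  rw [transpose_add, Matrix.add_mul, hFQ, add_zero]
  simpa [conjTranspose_eq_transpose_of_trivial] using posSemidef_conjTranspose_mul_self Q

theorem exists_dotProduct_skew_perturbation_ne_zero (J : Matrix α α ℝ) (q : α → ℝ)
    {u w : α → ℝ} (hu : u ≠ 0) (hw : w ≠ 0) (huw : u ⬝ᵥ w = 0) :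
    ∃ δ : ℝ, u ⬝ᵥ ((J + δ • (vecMulVec u w - vecMulVec w u)) *ᵥ (q + δ • w)) ≠ 0 := by
  have hskew (z : α → ℝ) :
      u ⬝ᵥ ((vecMulVec u w - vecMulVec w u) *ᵥ z) = (u ⬝ᵥ u) * (w ⬝ᵥ z) := by
    simp [sub_mulVec, vecMulVec_mulVec, dotProduct_sub, huw, mul_comm]
  have hquad (δ : ℝ) : u ⬝ᵥ ((J + δ • (vecMulVec u w - vecMulVec w u)) *ᵥ (q + δ • w)) =
      u ⬝ᵥ (J *ᵥ q) + (u ⬝ᵥ (J *ᵥ w) + (u ⬝ᵥ u) * (w ⬝ᵥ q)) * δ +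
        (u ⬝ᵥ u) * (w ⬝ᵥ w) * δ ^ 2 := by
    simp only [add_mulVec, mulVec_add, smul_mulVec, mulVec_smul, dotProduct_add,
      dotProduct_smul, hskew, smul_eq_mul]
    ring
  have hlead : (u ⬝ᵥ u) * (w ⬝ᵥ w) ≠ 0 :=
    mul_ne_zero (dotProduct_self_eq_zero.not.mpr hu) (dotProduct_self_eq_zero.not.mpr hw)
  by_contra! h
  have h0 := h 0
  have h1 := h 1
  have h2 := h (-1)
  rw [hquad] at h0 h1 h2
  exact hlead (by linarith)

end Matrix

end LinearAlgebra

section Analytic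

open Filter Topology Set

theorem exists_add_smul_ne_zero_of_homogeneous {E : Type*} [AddCommGroup E] [Module ℝ E]
    [TopologicalSpace E] [ContinuousAdd E] [ContinuousSMul ℝ E] {f : E → ℝ} (hf : Continuous f)
    {k : ℕ} (hhom : ∀ (c : ℝ) (y : E), f (c • y) = c ^ k * f y) (x : E) {d : E} (hd : f d ≠ 0) :
    ∃ δ : ℝ, f (x + δ • d) ≠ 0 := by
  have hcont : Continuous fun s : ℝ => f (s • x + d) := hf.comp (by fun_prop)
  have hev : ∀ᶠ s in 𝓝[≠] (0 : ℝ), f (s • x + d) ≠ 0 :=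
    nhdsWithin_le_nhds (hcont.continuousAt.eventually_ne (by simpa using hd))
  obtain ⟨s, hs, hs0⟩ := (hev.and self_mem_nhdsWithin).exists
  have hs0' : s ≠ 0 := hs0
  refine ⟨s⁻¹, ?_⟩
  rw [show x + s⁻¹ • d = s⁻¹ • (s • x + d) by
    rw [smul_add, smul_smul, inv_mul_cancel₀ hs0', one_smul], hhom]
  exact mul_ne_zero (pow_ne_zero _ (inv_ne_zero hs0')) hs

theorem mem_closure_inter_of_analyticOnNhd {E : Type*} [NormedAddCommGroup E] [NormedSpace ℝ E]
    {f : E → ℝ} (hf : AnalyticOnNhd ℝ f univ) {V : Set E} {x d : E}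
    (hV : ∀ δ : ℝ, 0 < δ → x + δ • d ∈ V) {δ₀ : ℝ} (hδ₀ : f (x + δ₀ • d) ≠ 0) :
    x ∈ closure ({y | f y ≠ 0} ∩ V) := by
  have hφ : AnalyticOnNhd ℝ (fun δ : ℝ => f (x + δ • d)) univ := fun δ _ =>
    (hf _ (mem_univ _)).comp (analyticAt_const.add (analyticAt_id.smul analyticAt_const))
  have hne : ∀ᶠ δ in 𝓝[≠] (0 : ℝ), f (x + δ • d) ≠ 0 :=
    (hφ 0 (mem_univ _)).eventually_eq_zero_or_eventually_ne_zero.resolve_left fun h0 =>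
      hδ₀ (hφ.eqOn_zero_of_preconnected_of_eventuallyEq_zero isPreconnected_univ (mem_univ _) h0
        (mem_univ δ₀))
  have hlim : Tendsto (fun δ : ℝ => x + δ • d) (𝓝[>] 0) (𝓝 x) := by
    have hcont : Continuous fun δ : ℝ => x + δ • d := by fun_prop
    simpa using (hcont.tendsto 0).mono_left nhdsWithin_le_nhds
  refine mem_closure_of_tendsto hlim ?_
  filter_upwards [nhdsGT_le_nhdsNE 0 hne, self_mem_nhdsWithin] with δ hδ hpos
  exact ⟨hδ, hV δ hpos⟩

end Analytic

theorem IsAlgebraicSet.isClosed {ι : Type} [Fintype ι] {W : Set (ι → ℝ)} (h : IsAlgebraicSet W) :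
    IsClosed W := by
  obtain ⟨k, p, rfl⟩ := h
  simp only [Set.ofPred_forall]
  exact isClosed_iInter fun i => isClosed_eq (MvPolynomial.continuous_eval (p i)) continuous_const

theorem RelGeneric.not_compl {ι : Type} [Fintype ι] {S V : Set (ι → ℝ)} (hV : V.Nonempty)
    (h : RelGeneric S V) : ¬RelGeneric Sᶜ V := by
  obtain ⟨W₁, -, hsub₁, hdense₁⟩ := h
  rintro ⟨W₂, hW₂, hsub₂, hdense₂⟩
  have hoff : W₁ᶜ ∩ V ⊆ W₂ := fun y ⟨hy₁, hy⟩ =>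
    (hsub₂ ⟨fun hyS => hy₁ (hsub₁ ⟨hyS, hy⟩).1, hy⟩).1
  have hVW₂ : V ⊆ W₂ := hdense₁.trans (hW₂.isClosed.closure_subset_iff.mpr hoff)
  have hempty : W₂ᶜ ∩ V = ∅ := Set.eq_empty_of_forall_notMem fun y ⟨hy₂, hy⟩ => hy₂ (hVW₂ hy)
  obtain ⟨x, hx⟩ := hV
  simpa [hempty] using hdense₂ hx

section PortHamiltonian

variable {ℓ n m : ℕ}

def ofMatrices (E : Matrix (Fin ℓ) (Fin n) ℝ) (J : Matrix (Fin ℓ) (Fin ℓ) ℝ)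
    (Q : Matrix (Fin ℓ) (Fin n) ℝ) (B : Matrix (Fin ℓ) (Fin m) ℝ) : IdxH ℓ n m → ℝ :=
  Sum.elim (fun p => E p.1 p.2) <| Sum.elim (fun p => J p.1 p.2) <|
    Sum.elim (fun p => Q p.1 p.2) fun p => B p.1 p.2

section

variable (E : Matrix (Fin ℓ) (Fin n) ℝ) (J : Matrix (Fin ℓ) (Fin ℓ) ℝ)
  (Q : Matrix (Fin ℓ) (Fin n) ℝ) (B : Matrix (Fin ℓ) (Fin m) ℝ) (x y : IdxH ℓ n m → ℝ) (c : ℝ)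

@[simp] theorem mE_ofMatrices : mE (ofMatrices E J Q B) = E := rfl
@[simp] theorem mJ_ofMatrices : mJ (ofMatrices E J Q B) = J := rfl
@[simp] theorem mQ_ofMatrices : mQ (ofMatrices E J Q B) = Q := rfl
@[simp] theorem mB_ofMatrices : mB (ofMatrices E J Q B) = B := rfl
@[simp] theorem mE_add : mE (x + y) = mE x + mE y := rfl
@[simp] theorem mJ_add : mJ (x + y) = mJ x + mJ y := rfl
@[simp] theorem mQ_add : mQ (x + y) = mQ x + mQ y := rfl
@[simp] theorem mB_add : mB (x + y) = mB x + mB y := rfl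
@[simp] theorem mE_smul : mE (c • x) = c • mE x := rfl
@[simp] theorem mJ_smul : mJ (c • x) = c • mJ x := rfl
@[simp] theorem mQ_smul : mQ (c • x) = c • mQ x := rfl
@[simp] theorem mB_smul : mB (c • x) = c • mB x := rfl

end

theorem ofMatrices_zero_mem_sigmaH : ofMatrices 0 0 0 0 ∈ SigmaH ℓ n m := by
  simp [SigmaH, PosSemidef.zero]

theorem add_smul_ofMatrices_mem_sigmaH {x : IdxH ℓ n m → ℝ} (hx : x ∈ SigmaH ℓ n m)
    {G : Matrix (Fin ℓ) (Fin n) ℝ} (hG : (Gᵀ * mQ x).PosSemidef) (C : Matrix (Fin ℓ) (Fin m) ℝ)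
    {δ : ℝ} (hδ : 0 ≤ δ) : x + δ • ofMatrices G 0 0 C ∈ SigmaH ℓ n m := by
  obtain ⟨hJ, hsym, hpsd⟩ := hx
  have hGsym : (mQ x)ᵀ * G = Gᵀ * mQ x := by
    simpa [conjTranspose_eq_transpose_of_trivial, transpose_mul] using hG.1.eq
  have hexp : (mE x + δ • G)ᵀ * mQ x = (mE x)ᵀ * mQ x + δ • (Gᵀ * mQ x) := by
    rw [transpose_add, transpose_smul, Matrix.add_mul, Matrix.smul_mul]
  simp only [SigmaH, Set.mem_ofPred_eq, mE_add, mJ_add, mQ_add, mE_smul, mJ_smul, mQ_smul,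
    mE_ofMatrices, mJ_ofMatrices, mQ_ofMatrices, smul_zero, add_zero]
  refine ⟨hJ, ?_, ?_⟩
  · rw [hexp, hsym, Matrix.mul_add, Matrix.mul_smul, hGsym]
  · rw [hexp]
    exact hpsd.add (hG.smul hδ)

theorem add_smul_ofMatrices_mem_sigmaH_of_skew {x : IdxH ℓ n m → ℝ} (hx : x ∈ SigmaH ℓ n m)
    {K : Matrix (Fin ℓ) (Fin ℓ) ℝ} (hK : Kᵀ = -K) {N : Matrix (Fin ℓ) (Fin n) ℝ}
    (hN : (mE x)ᵀ * N = 0) (δ : ℝ) : x + δ • ofMatrices 0 K N 0 ∈ SigmaH ℓ n m := by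
  obtain ⟨hJ, hsym, hpsd⟩ := hx
  have hN' : Nᵀ * mE x = 0 := by simpa using congrArg transpose hN
  simp only [SigmaH, Set.mem_ofPred_eq, mE_add, mJ_add, mQ_add, mE_smul, mJ_smul, mQ_smul,
    mE_ofMatrices, mJ_ofMatrices, mQ_ofMatrices, smul_zero, add_zero]
  refine ⟨?_, ?_, ?_⟩
  · rw [transpose_add, transpose_smul, hJ, hK, smul_neg, neg_add]
  · rw [Matrix.mul_add, Matrix.mul_smul, hN, transpose_add, transpose_smul, Matrix.add_mul,
      Matrix.smul_mul, hN', hsym]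
  · rwa [Matrix.mul_add, Matrix.mul_smul, hN, smul_zero, add_zero]

def FreelyInitializable (x : IdxH ℓ n m → ℝ) : Prop :=
  (fromCols (mE x) (mB x)).rank = (fromCols (mE x) (fromCols (mJ x * mQ x) (mB x))).rank

def augmentedEB (x : IdxH ℓ n m → ℝ) (j : Fin n) :
    Matrix (Fin ℓ) ((Fin n ⊕ Fin m) ⊕ Unit) ℝ :=
  fromCols (fromCols (mE x) (mB x)) (replicateCol Unit ((mJ x * mQ x).col j))

theorem freelyInitializable_of_rank_eq {x : IdxH ℓ n m → ℝ}
    (h : (fromCols (mE x) (mB x)).rank = ℓ) : FreelyInitializable x := by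
  have hsub : (fromCols (mE x) (fromCols (mJ x * mQ x) (mB x))).submatrix id (Sum.map id Sum.inr) =
      fromCols (mE x) (mB x) := by
    ext i (k | k) <;> rfl
  have hle := rank_submatrix_le (fromCols (mE x) (fromCols (mJ x * mQ x) (mB x))) id
    (Sum.map id Sum.inr)
  have hheight := rank_le_card_height (fromCols (mE x) (fromCols (mJ x * mQ x) (mB x)))
  rw [hsub] at hle
  rw [Fintype.card_fin] at hheight
  unfold FreelyInitializable
  omega

theorem not_freelyInitializable_of_rank_augmentedEB {x : IdxH ℓ n m → ℝ} {j : Fin n}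
    (h : (augmentedEB x j).rank = n + m + 1) : ¬FreelyInitializable x := by
  have hsub : (fromCols (mE x) (fromCols (mJ x * mQ x) (mB x))).submatrix id
      (Sum.elim (Sum.map id Sum.inr) fun _ : Unit => Sum.inr (Sum.inl j)) = augmentedEB x j := by
    ext i ((k | k) | _) <;> rfl
  have hle := rank_submatrix_le (fromCols (mE x) (fromCols (mJ x * mQ x) (mB x))) id
    (Sum.elim (Sum.map id Sum.inr) fun _ : Unit => Sum.inr (Sum.inl j))
  have hwidth := rank_le_card_width (fromCols (mE x) (mB x))
  rw [hsub] at hle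
  simp only [Fintype.card_sum, Fintype.card_fin] at hwidth
  unfold FreelyInitializable
  omega

end PortHamiltonian

section Polynomials

open MvPolynomial

variable (ℓ n m : ℕ)

noncomputable def polyEB : Matrix (Fin ℓ) (Fin n ⊕ Fin m) (MvPolynomial (IdxH ℓ n m) ℝ) :=
  fromCols (Matrix.of fun i j => X (Sum.inl (i, j)))
    (Matrix.of fun i j => X (Sum.inr (Sum.inr (Sum.inr (i, j)))))

noncomputable def polyJQ : Matrix (Fin ℓ) (Fin n) (MvPolynomial (IdxH ℓ n m) ℝ) :=
  let J : Matrix (Fin ℓ) (Fin ℓ) (MvPolynomial (IdxH ℓ n m) ℝ) :=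
    Matrix.of fun i j => X (Sum.inr (Sum.inl (i, j)))
  let Q : Matrix (Fin ℓ) (Fin n) (MvPolynomial (IdxH ℓ n m) ℝ) :=
    Matrix.of fun i j => X (Sum.inr (Sum.inr (Sum.inl (i, j))))
  J * Q

noncomputable def fullRowRankPoly : MvPolynomial (IdxH ℓ n m) ℝ :=
  (polyEB ℓ n m * (polyEB ℓ n m)ᵀ).det

noncomputable def fullColRankPoly : MvPolynomial (IdxH ℓ n m) ℝ :=
  ((polyEB ℓ n m)ᵀ * polyEB ℓ n m).det

noncomputable def augmentedFullColRankPoly (j : Fin n) : MvPolynomial (IdxH ℓ n m) ℝ :=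
  let A := fromCols (polyEB ℓ n m) (replicateCol Unit ((polyJQ ℓ n m).col j))
  (Aᵀ * A).det

variable {ℓ n m} (x : IdxH ℓ n m → ℝ)

theorem polyEB_map_eval : (polyEB ℓ n m).map (eval x) = fromCols (mE x) (mB x) := by
  ext i (j | j) <;> simp [polyEB, mE, mB]

theorem polyJQ_map_eval : (polyJQ ℓ n m).map (eval x) = mJ x * mQ x := by
  rw [polyJQ, Matrix.map_mul]
  congr 1 <;> ext i j <;> simp [mJ, mQ]

theorem eval_fullRowRankPoly : eval x (fullRowRankPoly ℓ n m) =
    (fromCols (mE x) (mB x) * (fromCols (mE x) (mB x))ᵀ).det := by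
  rw [fullRowRankPoly, RingHom.map_det, RingHom.mapMatrix_apply, Matrix.map_mul, transpose_map,
    polyEB_map_eval]

theorem eval_fullColRankPoly : eval x (fullColRankPoly ℓ n m) =
    ((fromCols (mE x) (mB x))ᵀ * fromCols (mE x) (mB x)).det := by
  rw [fullColRankPoly, RingHom.map_det, RingHom.mapMatrix_apply, Matrix.map_mul, transpose_map,
    polyEB_map_eval]

theorem eval_augmentedFullColRankPoly (j : Fin n) :
    eval x (augmentedFullColRankPoly ℓ n m j) = ((augmentedEB x j)ᵀ * augmentedEB x j).det := by
  have hmap : (fromCols (polyEB ℓ n m) (replicateCol Unit ((polyJQ ℓ n m).col j))).map (eval x) =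
      augmentedEB x j := by
    rw [fromCols_map, polyEB_map_eval, augmentedEB, ← polyJQ_map_eval]
    rfl
  rw [augmentedFullColRankPoly, RingHom.map_det, RingHom.mapMatrix_apply, Matrix.map_mul,
    transpose_map, hmap]

theorem eval_smul_fullRowRankPoly (c : ℝ) (y : IdxH ℓ n m → ℝ) :
    eval (c • y) (fullRowRankPoly ℓ n m) = c ^ (2 * ℓ) * eval y (fullRowRankPoly ℓ n m) := by
  rw [eval_fullRowRankPoly, eval_fullRowRankPoly, mE_smul, mB_smul, fromCols_smul, transpose_smul,
    Matrix.smul_mul, Matrix.mul_smul, smul_smul, det_smul, Fintype.card_fin, pow_mul, sq]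

theorem eval_smul_fullColRankPoly (c : ℝ) (y : IdxH ℓ n m → ℝ) :
    eval (c • y) (fullColRankPoly ℓ n m) = c ^ (2 * (n + m)) * eval y (fullColRankPoly ℓ n m) := by
  rw [eval_fullColRankPoly, eval_fullColRankPoly, mE_smul, mB_smul, fromCols_smul, transpose_smul,
    Matrix.smul_mul, Matrix.mul_smul, smul_smul, det_smul, Fintype.card_sum, Fintype.card_fin,
    Fintype.card_fin, pow_mul, sq]

end Polynomials

section Density

open MvPolynomial

variable {ℓ n m : ℕ}

theorem freelyInitializable_of_eval_fullRowRankPoly_ne_zero {x : IdxH ℓ n m → ℝ}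
    (h : eval x (fullRowRankPoly ℓ n m) ≠ 0) : FreelyInitializable x := by
  rw [eval_fullRowRankPoly, det_mul_transpose_ne_zero_iff, Fintype.card_fin] at h
  exact freelyInitializable_of_rank_eq h

theorem not_freelyInitializable_of_eval_augmentedFullColRankPoly_ne_zero {x : IdxH ℓ n m → ℝ}
    {j : Fin n} (h : eval x (augmentedFullColRankPoly ℓ n m j) ≠ 0) : ¬FreelyInitializable x := by
  rw [eval_augmentedFullColRankPoly, det_transpose_mul_ne_zero_iff] at h
  exact not_freelyInitializable_of_rank_augmentedEB (by simpa using h)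

theorem mem_closure_of_homogeneous {P : MvPolynomial (IdxH ℓ n m) ℝ} {k : ℕ}
    (hP : ∀ (c : ℝ) (y : IdxH ℓ n m → ℝ), eval (c • y) P = c ^ k * eval y P)
    {x : IdxH ℓ n m → ℝ} (hx : x ∈ SigmaH ℓ n m) {G : Matrix (Fin ℓ) (Fin n) ℝ}
    (hG : (Gᵀ * mQ x).PosSemidef) {C : Matrix (Fin ℓ) (Fin m) ℝ}
    (hd : eval (ofMatrices G 0 0 C) P ≠ 0) :
    x ∈ closure ({y | eval y P ≠ 0} ∩ SigmaH ℓ n m) := by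
  obtain ⟨δ₀, hδ₀⟩ := exists_add_smul_ne_zero_of_homogeneous (continuous_eval P) hP x hd
  exact mem_closure_inter_of_analyticOnNhd (AnalyticOnNhd.eval_mvPolynomial P)
    (fun δ hδ => add_smul_ofMatrices_mem_sigmaH hx hG C hδ.le) hδ₀

theorem mem_closure_fullRowRankPoly_ne_zero (h : ℓ ≤ n + m) {x : IdxH ℓ n m → ℝ}
    (hx : x ∈ SigmaH ℓ n m) :
    x ∈ closure ({y | eval y (fullRowRankPoly ℓ n m) ≠ 0} ∩ SigmaH ℓ n m) := by
  obtain ⟨F, C, hF, hrank⟩ := exists_transpose_mul_eq_zero_rank_fromCols (mQ x) (Fin m)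
  refine mem_closure_of_homogeneous eval_smul_fullRowRankPoly hx
    (posSemidef_add_transpose_mul hF) (C := C) ?_
  rw [eval_fullRowRankPoly, mE_ofMatrices, mB_ofMatrices, det_mul_transpose_ne_zero_iff, hrank]
  simpa using h

theorem mem_closure_fullColRankPoly_ne_zero (h : n + m ≤ ℓ) {x : IdxH ℓ n m → ℝ}
    (hx : x ∈ SigmaH ℓ n m) :
    x ∈ closure ({y | eval y (fullColRankPoly ℓ n m) ≠ 0} ∩ SigmaH ℓ n m) := by
  obtain ⟨F, C, hF, hrank⟩ := exists_transpose_mul_eq_zero_rank_fromCols (mQ x) (Fin m)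
  refine mem_closure_of_homogeneous eval_smul_fullColRankPoly hx
    (posSemidef_add_transpose_mul hF) (C := C) ?_
  rw [eval_fullColRankPoly, mE_ofMatrices, mB_ofMatrices, det_transpose_mul_ne_zero_iff, hrank]
  simpa using h

theorem mem_closure_augmentedFullColRankPoly_ne_zero (hgt : n + m < ℓ) (hm : 1 ≤ m) (j : Fin n)
    {y : IdxH ℓ n m → ℝ} (hy : y ∈ SigmaH ℓ n m) (hrank : eval y (fullColRankPoly ℓ n m) ≠ 0) :
    y ∈ closure ({x | eval x (augmentedFullColRankPoly ℓ n m j) ≠ 0} ∩ SigmaH ℓ n m) := by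
  rw [eval_fullColRankPoly, det_transpose_mul_ne_zero_iff] at hrank
  obtain ⟨u, hu, huEB⟩ :=
    exists_ne_zero_vecMul_eq_zero (fromCols (mE y) (mB y)) (by simpa using hgt)
  obtain ⟨w, hw, hwEu⟩ :=
    exists_ne_zero_vecMul_eq_zero (fromCols (mE y) (replicateCol Unit u))
      (by simp only [Fintype.card_sum, Fintype.card_fin, Fintype.card_unit]; omega)
  rw [vecMul_fromCols] at hwEu
  have hwE : w ᵥ* mE y = 0 := funext fun k => congr_fun hwEu (Sum.inl k)
  have huw : u ⬝ᵥ w = 0 := by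
    simpa [vecMul, dotProduct, replicateCol_apply, mul_comm] using congr_fun hwEu (Sum.inr ())
  set K := vecMulVec u w - vecMulVec w u
  set N := vecMulVec w (Pi.single j (1 : ℝ))
  have hK : Kᵀ = -K := by simp [K, transpose_vecMulVec]
  have hN : (mE y)ᵀ * N = 0 := by rw [mul_vecMulVec, mulVec_transpose, hwE, zero_vecMulVec]
  obtain ⟨δ₀, hδ₀⟩ := exists_dotProduct_skew_perturbation_ne_zero (mJ y) ((mQ y).col j) hu hw huw
  refine mem_closure_inter_of_analyticOnNhd (AnalyticOnNhd.eval_mvPolynomial _)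
    (fun δ _ => add_smul_ofMatrices_mem_sigmaH_of_skew hy hK hN δ) (δ₀ := δ₀) ?_
  have hcol : (mJ (y + δ₀ • ofMatrices 0 K N 0) * mQ (y + δ₀ • ofMatrices 0 K N 0)).col j =
      (mJ y + δ₀ • K) *ᵥ ((mQ y).col j + δ₀ • w) := by
    have hQcol : (mQ y + δ₀ • N).col j = (mQ y).col j + δ₀ • w := by
      ext i
      simp [N, vecMulVec_apply]
    simp only [mJ_add, mQ_add, mJ_smul, mQ_smul, mJ_ofMatrices, mQ_ofMatrices]
    rw [← mulVec_single_one, ← mulVec_mulVec, mulVec_single_one, hQcol]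
  have hEB : fromCols (mE (y + δ₀ • ofMatrices 0 K N 0)) (mB (y + δ₀ • ofMatrices 0 K N 0)) =
      fromCols (mE y) (mB y) := by
    simp
  rw [eval_augmentedFullColRankPoly, det_transpose_mul_ne_zero_iff, augmentedEB, hEB, hcol,
    rank_fromCols_replicateCol hrank huEB hδ₀]
  simp

theorem relGeneric_freelyInitializable (h : ℓ ≤ n + m) :
    RelGeneric {x ∈ SigmaH ℓ n m | FreelyInitializable x} (SigmaH ℓ n m) := by
  refine ⟨{x | eval x (fullRowRankPoly ℓ n m) = 0}, ⟨1, fun _ => fullRowRankPoly ℓ n m, by simp⟩,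
    ?_, fun x hx => ?_⟩
  · rintro x ⟨hxS, hx⟩
    exact ⟨not_not.mp fun hne => hxS ⟨hx, freelyInitializable_of_eval_fullRowRankPoly_ne_zero hne⟩,
      hx⟩
  · exact mem_closure_fullRowRankPoly_ne_zero h hx

theorem relGeneric_compl_freelyInitializable (hgt : n + m < ℓ) (hn : 1 ≤ n) (hm : 1 ≤ m) :
    RelGeneric {x ∈ SigmaH ℓ n m | FreelyInitializable x}ᶜ (SigmaH ℓ n m) := by
  let W := {x : IdxH ℓ n m → ℝ | ∀ j, eval x (augmentedFullColRankPoly ℓ n m j) = 0}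
  refine ⟨W, ⟨n, _, rfl⟩, ?_, fun x hx => ?_⟩
  · rintro x ⟨hxS, hx⟩
    refine ⟨fun j => not_not.mp fun hne => ?_, hx⟩
    exact not_freelyInitializable_of_eval_augmentedFullColRankPoly_ne_zero hne (not_not.mp hxS).2
  · have hW : {y | eval y (augmentedFullColRankPoly ℓ n m ⟨0, hn⟩) ≠ 0} ⊆ Wᶜ :=
      fun y hy hyW => hy (hyW ⟨0, hn⟩)
    have hstep :
        {y | eval y (fullColRankPoly ℓ n m) ≠ 0} ∩ SigmaH ℓ n m ⊆ closure (Wᶜ ∩ SigmaH ℓ n m) :=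
      fun y ⟨hy, hyH⟩ => closure_mono (Set.inter_subset_inter_left _ hW)
        (mem_closure_augmentedFullColRankPoly_ne_zero hgt hm ⟨0, hn⟩ hyH hy)
    exact closure_minimal hstep isClosed_closure (mem_closure_fullColRankPoly_ne_zero hgt.le hx)

end Density

theorem freely_initializable_relGeneric_iff_general (ℓ n m : ℕ) (hn : 1 ≤ n) (hm : 1 ≤ m) :
    (RelGeneric
      {x ∈ SigmaH ℓ n m |
        (Matrix.fromCols (mE x) (mB x)).rank =
          (Matrix.fromCols (mE x) (Matrix.fromCols (mJ x * mQ x) (mB x))).rank}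
      (SigmaH ℓ n m) ↔ ℓ ≤ n + m) ∧
    (ℓ > n + m →
      RelGeneric
        {x ∈ SigmaH ℓ n m |
          (Matrix.fromCols (mE x) (mB x)).rank =
            (Matrix.fromCols (mE x) (Matrix.fromCols (mJ x * mQ x) (mB x))).rank}ᶜ
        (SigmaH ℓ n m)) := by
  have hcompl (hgt : ℓ > n + m) := relGeneric_compl_freelyInitializable hgt hn hm
  refine ⟨⟨fun hgen => ?_, relGeneric_freelyInitializable⟩, hcompl⟩
  by_contra hgt
  exact hgen.not_compl ⟨_, ofMatrices_zero_mem_sigmaH⟩ (hcompl (not_le.mp hgt))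

/-- the set of freely initializable pH descriptor systems,
`{(E,J,Q,B) ∈ Σ^H : rank [E, B] = rank [E, JQ, B]}`, is relative generic in
`Σ^H_{ℓ,n,m}` iff `ℓ ≤ n + m`; if `ℓ > n + m` then its complement is relative
generic in `Σ^H_{ℓ,n,m}`. -/
theorem freely_initializable_relGeneric_iff (ℓ n m : ℕ) (hℓ : 1 ≤ ℓ) (hn : 1 ≤ n) (hm : 1 ≤ m) :
    (RelGeneric
      {x ∈ SigmaH ℓ n m |
        (Matrix.fromCols (mE x) (mB x)).rank =
          (Matrix.fromCols (mE x) (Matrix.fromCols (mJ x * mQ x) (mB x))).rank}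
      (SigmaH ℓ n m) ↔ ℓ ≤ n + m) ∧
    (ℓ > n + m →
      RelGeneric
        {x ∈ SigmaH ℓ n m |
          (Matrix.fromCols (mE x) (mB x)).rank =
            (Matrix.fromCols (mE x) (Matrix.fromCols (mJ x * mQ x) (mB x))).rank}ᶜ
        (SigmaH ℓ n m)) :=
  freely_initializable_relGeneric_iff_general ℓ n m hn hm
end
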